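/- arXiv:0910.3978 — 4 statements merged into one kernel-verified Lean document; each statement's English description precedes it below -/
import Mathlib

section
/- Let H : A → B be a functor and C a full subcategory of A whose inclusion I : C → A has a right adjoint R with counit μ : I∘R → id_A. If μ_X is an H-equivalence for every X, then μ_X is an isomorphism for every H-colocal X; consequently every H-colocal object lies in C. -/
/-!
`μ_X` is an `H`-equivalence, so colocality of `X` gives a section `s` of `μ_X`. Since the
inclusion is fully faithful, composing with `μ_X` is a bijection out of objects of `C`
(it is the adjunction bijection), and `(μ_X ≫ s) ≫ μ_X = 𝟙 ≫ μ_X` forces `μ_X ≫ s = 𝟙`.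
-/

open CategoryTheory

namespace CategoryTheory

lemma isIso_of_surjective_comp_of_injective_comp {C : Type*} [Category C] {U X : C}
    (ε : U ⟶ X) (hsurj : Function.Surjective (fun f : X ⟶ U => f ≫ ε))
    (hinj : Function.Injective (fun f : U ⟶ U => f ≫ ε)) : IsIso ε := by
  obtain ⟨s, hs⟩ := hsurj (𝟙 X)
  have hεs : ε ≫ s = 𝟙 U := hinj (by simp only [Category.assoc, hs, Category.comp_id,
    Category.id_comp])
  exact ⟨s, hεs, hs⟩

lemma Adjunction.bijective_comp_counit_app {C D : Type*} [Category C] [Category D]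
    {L : C ⥤ D} {R : D ⥤ C} (adj : L ⊣ R) (hL : L.FullyFaithful) (Y : C) (X : D) :
    Function.Bijective (fun f : L.obj Y ⟶ L.obj (R.obj X) => f ≫ adj.counit.app X) := by
  have : (fun f : L.obj Y ⟶ L.obj (R.obj X) => f ≫ adj.counit.app X) =
      (adj.homEquiv Y X).symm ∘ hL.homEquiv.symm := by
    ext f
    simp [Adjunction.homEquiv_counit]
  rw [this]
  exact (hL.homEquiv.symm.trans (adj.homEquiv Y X).symm).bijective

end CategoryTheory

/-- Let `C` be the full subcategory of `A` given by a predicate `P` closed under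
isomorphisms, whose inclusion `I` has a right adjoint `R` with counit `μ`. If every
`μ_X` is an `H`-equivalence, then `μ_X` is an isomorphism for every `H`-colocal `X`,
and consequently every `H`-colocal object lies in `C`. -/
theorem smallest_colocal {A : Type*} [Category A] {B : Type*} [Category B]
    (H : A ⥤ B) (P : A → Prop)
    (hP : ∀ {X Y : A}, (X ≅ Y) → P X → P Y)
    (R : A ⥤ ObjectProperty.FullSubcategory P)
    (adj : ObjectProperty.ι P ⊣ R)
    (hμ : ∀ X : A, IsIso (H.map (adj.counit.app X)))
    (X : A)
    (hX : ∀ {U V : A} (ε : U ⟶ V), IsIso (H.map ε) →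
      Function.Bijective (fun f : X ⟶ U => f ≫ ε)) :
    IsIso (adj.counit.app X) ∧ P X := by
  have hiso : IsIso (adj.counit.app X) :=
    isIso_of_surjective_comp_of_injective_comp _ (hX _ (hμ X)).2
      (adj.bijective_comp_counit_app (ObjectProperty.fullyFaithfulι P) (R.obj X) X).1
  exact ⟨hiso, hP (asIso (adj.counit.app X)) (R.obj X).property⟩
end

section
/- Let T ⊣ H be an adjunction with unit η and counit δ. If every object of the form H(X) is η-reflexive (η_{H(X)} is an isomorphism for all X in A), then the δ-reflexive objects of A coincide with the H-colocal objects of A. -/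
/-!
Every object `T Y` is `H`-colocal, since `A(T Y, -) ≅ B(Y, H -)` turns postcomposition with `ε`
into postcomposition with the isomorphism `H ε`; colocality is invariant under isomorphism, so
`δ`-reflexive objects, being isomorphic to `T (H X)`, are colocal. Conversely, a morphism between
colocal objects that `H` inverts is an isomorphism, and the triangle identity
`η_{H X} ≫ H δ_X = 𝟙` shows that `H` inverts `δ_X : T (H X) ⟶ X` once `η_{H X}` is invertible.
-/

open CategoryTheory

namespace CategoryTheory.Functor

variable {A B : Type*} [Category A] [Category B]

def IsColocal (H : A ⥤ B) (X : A) : Prop :=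
  ∀ {U V : A} (ε : U ⟶ V), IsIso (H.map ε) → Function.Bijective (fun f : X ⟶ U => f ≫ ε)

variable {H : A ⥤ B}

lemma IsColocal.of_iso {X Y : A} (e : X ≅ Y) (hY : H.IsColocal Y) : H.IsColocal X := by
  intro U V ε hε
  have hcomp : (fun f : X ⟶ U => f ≫ ε) =
      (e.homCongr (Iso.refl V)).symm ∘ (fun g : Y ⟶ U => g ≫ ε) ∘ e.homCongr (Iso.refl U) := by
    funext f
    simp [Iso.homCongr]
  rw [hcomp]
  exact (Equiv.bijective _).comp ((hY ε hε).comp (Equiv.bijective _))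

lemma isColocal_obj_of_adjunction {T : B ⥤ A} (adj : T ⊣ H) (Y : B) :
    H.IsColocal (T.obj Y) := by
  intro U V ε hε
  have hcomp : (fun f : T.obj Y ⟶ U => f ≫ ε) =
      (adj.homEquiv Y V).symm ∘ (asIso (H.map ε)).homToEquiv ∘ adj.homEquiv Y U := by
    funext f
    simp [← adj.homEquiv_naturality_right]
  rw [hcomp]
  exact (Equiv.bijective _).comp ((Equiv.bijective _).comp (Equiv.bijective _))

lemma IsColocal.isIso_of_isIso_map {X Y : A} (f : X ⟶ Y) [IsIso (H.map f)]
    (hX : H.IsColocal X) (hY : H.IsColocal Y) : IsIso f := by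
  obtain ⟨s, hs⟩ := (hY f inferInstance).2 (𝟙 Y)
  refine ⟨s, (hX f inferInstance).1 ?_, hs⟩
  simp only [Category.assoc, hs, Category.comp_id, Category.id_comp]

end CategoryTheory.Functor

lemma CategoryTheory.Adjunction.isIso_map_counit_app {A B : Type*} [Category A] [Category B]
    {H : A ⥤ B} {T : B ⥤ A} (adj : T ⊣ H) (X : A) [IsIso (adj.unit.app (H.obj X))] :
    IsIso (H.map (adj.counit.app X)) := by
  have : IsIso (adj.unit.app (H.obj X) ≫ H.map (adj.counit.app X)) := by
    rw [adj.right_triangle_components]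
    exact IsIso.id _
  exact IsIso.of_isIso_comp_left (adj.unit.app (H.obj X)) _

/-- If every object of the form `H(X)` is `η`-reflexive, then the `δ`-reflexive objects
of `A` coincide with the `H`-colocal objects. -/
theorem delta_reflexive_iff_colocal {A : Type*} [Category A] {B : Type*} [Category B]
    (H : A ⥤ B) (T : B ⥤ A) (adj : T ⊣ H)
    (h : ∀ X : A, IsIso (adj.unit.app (H.obj X))) :
    ∀ X : A, IsIso (adj.counit.app X) ↔
      (∀ {U V : A} (ε : U ⟶ V), IsIso (H.map ε) →
        Function.Bijective (fun f : X ⟶ U => f ≫ ε)) := by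
  intro X
  have hTHX : H.IsColocal (T.obj (H.obj X)) := H.isColocal_obj_of_adjunction adj (H.obj X)
  constructor
  · intro hδ
    exact Functor.IsColocal.of_iso (asIso (adj.counit.app X)).symm hTHX
  · intro hX
    have := h X
    have := adj.isIso_map_counit_app X
    exact hTHX.isIso_of_isIso_map (adj.counit.app X) hX
end

section
/- For an adjunction T ⊣ H between categories A and B, the following are equivalent: (i) the η-reflexive objects of B coincide with the essential image of H; (ii) the δ-reflexive objects of A coincide with the essential image of T; (iii) the δ-reflexive objects of A coincide with the H-colocal objects; (iv) the η-reflexive objects of B coincide with the T-local objects. -/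
/-!
Each condition is equivalent to idempotency of the adjunction: `η` invertible on the image of
`H`, equivalently `δ` invertible on the image of `T`. The adjunction bijection makes every
`T Y` colocal for the morphisms inverted by `H` and every `H X` local for those inverted by `T`,
and a morphism in a class `W` between `W`-colocal (or `W`-local) objects is an isomorphism.
This forces `δ_X` to be invertible as soon as `H δ_X` is and `X` is `H`-colocal, and dually for
`η`; the triangle identities supply the invertibility of `H δ_X` and `T η_Y`.
-/

namespace CategoryTheory

namespace MorphismProperty

variable {C : Type*} [Category C] {W : MorphismProperty C}

lemma isIso_of_isColocal {X Y : C} {f : X ⟶ Y} (hf : W f) (hX : W.isColocal X)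
    (hY : W.isColocal Y) : IsIso f :=
  (ObjectProperty.isColocal_iff_isIso _ f hX hY).1 (W.le_isColocal_isColocal f hf)

lemma isIso_of_isLocal {X Y : C} {f : X ⟶ Y} (hf : W f) (hX : W.isLocal X)
    (hY : W.isLocal Y) : IsIso f :=
  (ObjectProperty.isLocal_iff_isIso _ f hX hY).1 (W.le_isLocal_isLocal f hf)

end MorphismProperty

namespace Adjunction

open MorphismProperty

variable {A B : Type*} [Category A] [Category B] {H : A ⥤ B} {T : B ⥤ A}

lemma isColocal_inverseImage_obj (adj : T ⊣ H) (Y : B) :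
    ((isomorphisms B).inverseImage H).isColocal (T.obj Y) := by
  intro U V g (_ : IsIso (H.map g))
  convert ((adj.homEquiv Y U).trans
    ((asIso (H.map g)).homToEquiv.trans (adj.homEquiv Y V).symm)).bijective using 1
  ext f
  simp [← homEquiv_naturality_right]

lemma isLocal_inverseImage_obj (adj : T ⊣ H) (X : A) :
    ((isomorphisms A).inverseImage T).isLocal (H.obj X) := by
  intro U V g (_ : IsIso (T.map g))
  convert ((adj.homEquiv V X).symm.trans
    ((asIso (T.map g)).homFromEquiv.symm.trans (adj.homEquiv U X))).bijective using 1
  ext f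
  simp [← homEquiv_naturality_left_symm]

variable (adj : T ⊣ H)

lemma isIso_map_counit_app_of_isIso_unit_app (X : A) [IsIso (adj.unit.app (H.obj X))] :
    IsIso (H.map (adj.counit.app X)) :=
  isIso_of_hom_comp_eq_id _ (adj.right_triangle_components X)

lemma isIso_map_unit_app_of_isIso_counit_app (Y : B) [IsIso (adj.counit.app (T.obj Y))] :
    IsIso (T.map (adj.unit.app Y)) :=
  isIso_of_comp_hom_eq_id _ (adj.left_triangle_components Y)

lemma isIso_counit_app_of_isColocal {X : A} [IsIso (H.map (adj.counit.app X))]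
    (hX : ((isomorphisms B).inverseImage H).isColocal X) : IsIso (adj.counit.app X) :=
  isIso_of_isColocal (f := adj.counit.app X) ‹_› (adj.isColocal_inverseImage_obj _) hX

lemma isIso_unit_app_of_isLocal {Y : B} [IsIso (T.map (adj.unit.app Y))]
    (hY : ((isomorphisms A).inverseImage T).isLocal Y) : IsIso (adj.unit.app Y) :=
  isIso_of_isLocal (f := adj.unit.app Y) ‹_› hY (adj.isLocal_inverseImage_obj _)

lemma isColocal_of_isIso_counit_app (X : A) [IsIso (adj.counit.app X)] :
    ((isomorphisms B).inverseImage H).isColocal X :=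
  ObjectProperty.prop_of_iso _ (asIso (adj.counit.app X)) (adj.isColocal_inverseImage_obj _)

lemma isLocal_of_isIso_unit_app (Y : B) [IsIso (adj.unit.app Y)] :
    ((isomorphisms A).inverseImage T).isLocal Y :=
  ObjectProperty.prop_of_iso _ (asIso (adj.unit.app Y)).symm (adj.isLocal_inverseImage_obj _)

def IsIdempotent : Prop :=
  ∀ X : A, IsIso (adj.unit.app (H.obj X))

lemma isIdempotent_iff_isIso_counit_app_obj :
    adj.IsIdempotent ↔ ∀ Y : B, IsIso (adj.counit.app (T.obj Y)) := by
  constructor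
  · -- `δ_{TY}` is inverted by `H` and goes between the `H`-colocal objects `THTY` and `TY`.
    intro h Y
    have := h (T.obj Y)
    have := adj.isIso_map_counit_app_of_isIso_unit_app (T.obj Y)
    exact adj.isIso_counit_app_of_isColocal (adj.isColocal_inverseImage_obj Y)
  · intro h X
    have := h (H.obj X)
    have := adj.isIso_map_unit_app_of_isIso_counit_app (H.obj X)
    exact adj.isIso_unit_app_of_isLocal (adj.isLocal_inverseImage_obj X)

lemma isIdempotent_iff_forall_isIso_unit_app_iff_mem_essImage :
    adj.IsIdempotent ↔ ∀ Y : B, IsIso (adj.unit.app Y) ↔ H.essImage Y := by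
  refine ⟨fun h Y => ⟨fun _ => adj.mem_essImage_of_unit_isIso Y, ?_⟩,
    fun h X => (h _).2 (H.obj_mem_essImage X)⟩
  rintro ⟨X, ⟨e⟩⟩
  exact (NatTrans.isIso_app_iff_of_iso _ e).1 (h X)

lemma isIdempotent_iff_forall_isIso_counit_app_iff_mem_essImage :
    adj.IsIdempotent ↔ ∀ X : A, IsIso (adj.counit.app X) ↔ T.essImage X := by
  rw [isIdempotent_iff_isIso_counit_app_obj]
  refine ⟨fun h X => ⟨fun _ => adj.mem_essImage_of_counit_isIso X, ?_⟩,
    fun h Y => (h _).2 (T.obj_mem_essImage Y)⟩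
  rintro ⟨Y, ⟨e⟩⟩
  exact (NatTrans.isIso_app_iff_of_iso _ e).1 (h Y)

lemma isIdempotent_iff_forall_isIso_counit_app_iff_isColocal :
    adj.IsIdempotent ↔
      ∀ X : A, IsIso (adj.counit.app X) ↔ ((isomorphisms B).inverseImage H).isColocal X := by
  refine ⟨fun h X => ⟨fun _ => adj.isColocal_of_isIso_counit_app X, fun hX => ?_⟩,
    fun h => (adj.isIdempotent_iff_isIso_counit_app_obj).2
      fun Y => (h _).2 (adj.isColocal_inverseImage_obj Y)⟩
  have := h X
  have := adj.isIso_map_counit_app_of_isIso_unit_app X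
  exact adj.isIso_counit_app_of_isColocal hX

lemma isIdempotent_iff_forall_isIso_unit_app_iff_isLocal :
    adj.IsIdempotent ↔
      ∀ Y : B, IsIso (adj.unit.app Y) ↔ ((isomorphisms A).inverseImage T).isLocal Y := by
  refine ⟨fun h Y => ⟨fun _ => adj.isLocal_of_isIso_unit_app Y, fun hY => ?_⟩,
    fun h X => (h _).2 (adj.isLocal_inverseImage_obj X)⟩
  have := (adj.isIdempotent_iff_isIso_counit_app_obj).1 h Y
  have := adj.isIso_map_unit_app_of_isIso_counit_app Y
  exact adj.isIso_unit_app_of_isLocal hY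

end Adjunction

end CategoryTheory

open CategoryTheory

/-- For an adjunction `T ⊣ H`, the following are equivalent:
(i) the `η`-reflexive objects of `B` coincide with the essential image of `H`;
(ii) the `δ`-reflexive objects of `A` coincide with the essential image of `T`;
(iii) the `δ`-reflexive objects coincide with the `H`-colocal objects;
(iv) the `η`-reflexive objects coincide with the `T`-local objects. -/
theorem sisc_tfae {A : Type*} [Category A] {B : Type*} [Category B]
    (H : A ⥤ B) (T : B ⥤ A) (adj : T ⊣ H) :
    List.TFAE
      [ (∀ Y : B, IsIso (adj.unit.app Y) ↔ H.essImage Y),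
        (∀ X : A, IsIso (adj.counit.app X) ↔ T.essImage X),
        (∀ X : A, IsIso (adj.counit.app X) ↔
          (∀ {U V : A} (ε : U ⟶ V), IsIso (H.map ε) →
            Function.Bijective (fun f : X ⟶ U => f ≫ ε))),
        (∀ Y : B, IsIso (adj.unit.app Y) ↔
          (∀ {U V : B} (ε : U ⟶ V), IsIso (T.map ε) →
            Function.Bijective (fun g : V ⟶ Y => ε ≫ g))) ] := by
  have h1 := adj.isIdempotent_iff_forall_isIso_unit_app_iff_mem_essImage
  tfae_have 1 ↔ 2 := h1.symm.trans adj.isIdempotent_iff_forall_isIso_counit_app_iff_mem_essImage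
  tfae_have 1 ↔ 3 := h1.symm.trans adj.isIdempotent_iff_forall_isIso_counit_app_iff_isColocal
  tfae_have 1 ↔ 4 := h1.symm.trans adj.isIdempotent_iff_forall_isIso_unit_app_iff_isLocal
  tfae_finish
end

section
/- Let M be a monoid and A a right M-act that is a generator of the category of right M-acts. Then M is a retract of A, and consequently every M-act is H_A-colocal (a morphism of M-acts is an H_A-equivalence if and only if it is an isomorphism). -/
open CategoryTheory

universe u

/-- The category of right `M`-acts, as contravariant functors `SingleObj M ⥤ Type`. -/
abbrev ActCat (M : Type u) [Monoid M] := (SingleObj M)ᵒᵖ ⥤ Type u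

/-- The hom functor `Hom_M(A, −)`, landing in right `E`-acts via a monoid map
`φ : E →* End A` (`E` acts on `Hom_M(A, X)` by precomposition). -/
def homFunctor {M : Type u} [Monoid M] {E : Type u} [Monoid E] (A : ActCat M)
    (φ : E →* CategoryTheory.End A) : ActCat M ⥤ ActCat E where
  obj X :=
    { obj := fun _ => A ⟶ X
      map := fun e => TypeCat.ofHom (fun f => (φ e.unop : A ⟶ A) ≫ f)
      map_id := by
        intro x
        refine ConcreteCategory.hom_ext _ _ (fun f => ?_)
        show (φ ((𝟙 x).unop) : A ⟶ A) ≫ f = f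
        rw [show (𝟙 x).unop = (1 : E) from rfl]
        simp [End.one_def]
      map_comp := by
        intro x y z g h
        refine ConcreteCategory.hom_ext _ _ (fun f => ?_)
        show (φ ((g ≫ h).unop) : A ⟶ A) ≫ f = (φ h.unop : A ⟶ A) ≫ ((φ g.unop : A ⟶ A) ≫ f)
        rw [show (g ≫ h).unop = g.unop * h.unop from rfl]
        rw [map_mul]
        simp [End.mul_def] }
  map g := { app := fun _ => TypeCat.ofHom (fun f => f ≫ g) }

/-!
Because `A` separates, the canonical map `∐_{f : A ⟶ P} A ⟶ P` is an epimorphism, hence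
surjective at every object, so every element of a presheaf `P` is `f.app x a` for some
`f : A ⟶ P`. Applied to `𝟙 X ∈ (yoneda.obj X).obj (op X)` this yields `p : A ⟶ yoneda X` and
`a` with `p a = 𝟙 X`; the Yoneda morphism of `a` is then a section of `p`. As every
representable is a retract of `A`, bijectivity of `Hom(A, ε)` passes to
`Hom(yoneda X, ε) ≃ ε.app (op X)`, so `ε` is an isomorphism.
-/

open Limits Opposite Function

namespace CategoryTheory

section Retract

variable {D : Type*} [Category D]

theorem bijective_comp_of_isIso (X : D) {U V : D} (ε : U ⟶ V) [IsIso ε] :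
    Bijective (fun f : X ⟶ U => f ≫ ε) :=
  ⟨fun _ _ h => (cancel_mono ε).mp h, fun g => ⟨g ≫ inv ε, by simp⟩⟩

theorem Retract.bijective_comp {P A U V : D} (h : Retract P A) {ε : U ⟶ V}
    (hε : Bijective (fun f : A ⟶ U => f ≫ ε)) : Bijective (fun f : P ⟶ U => f ≫ ε) := by
  refine ⟨fun f₁ f₂ hf => ?_, fun g => ?_⟩
  · have hr : h.r ≫ f₁ = h.r ≫ f₂ := hε.1 (by simpa using h.r ≫= hf)
    simpa using h.i ≫= hr
  · obtain ⟨f, hf⟩ := hε.2 (h.r ≫ g)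
    exact ⟨h.i ≫ f, by simpa using h.i ≫= hf⟩

end Retract

section Presheaf

variable {C : Type*} [Category.{u} C]

theorem bijective_app_iff_bijective_comp_yoneda {U V : Cᵒᵖ ⥤ Type u} (ε : U ⟶ V) (X : C) :
    Bijective (ε.app (op X)) ↔ Bijective (fun f : yoneda.obj X ⟶ U => f ≫ ε) := by
  have hcomm : ε.app (op X) ∘ yonedaEquiv = yonedaEquiv ∘ (fun f : yoneda.obj X ⟶ U => f ≫ ε) :=
    funext fun f => (yonedaEquiv_comp f ε).symm
  rw [← Equiv.bijective_comp yonedaEquiv, hcomm, Equiv.comp_bijective]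

variable {A : Cᵒᵖ ⥤ Type u} [∀ P : Cᵒᵖ ⥤ Type u, HasCoproduct fun _ : A ⟶ P => A]

theorem exists_app_eq_of_isSeparator (hA : IsSeparator A) {P : Cᵒᵖ ⥤ Type u} {x : Cᵒᵖ}
    (y : P.obj x) : ∃ (f : A ⟶ P) (a : A.obj x), f.app x a = y := by
  have hepi := (isSeparator_iff_epi A).mp hA P
  obtain ⟨z, rfl⟩ := (epi_iff_surjective _).mp ((NatTrans.epi_iff_epi_app _).mp hepi x) y
  obtain ⟨⟨f⟩, a, rfl⟩ := Types.jointly_surjective_of_isColimit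
    (isColimitOfPreserves ((evaluation _ _).obj x) (colimit.isColimit _)) z
  have hι := congrArg (NatTrans.app · x) (Sigma.ι_desc (fun f : A ⟶ P => f) f)
  exact ⟨f, a, (types_congr_hom hι a).symm⟩

theorem nonempty_retract_yoneda_of_isSeparator (hA : IsSeparator A) (X : C) :
    Nonempty (Retract (yoneda.obj X) A) := by
  obtain ⟨p, a, hpa⟩ := exists_app_eq_of_isSeparator hA (P := yoneda.obj X) (x := op X) (𝟙 X)
  refine ⟨yonedaEquiv.symm a, p, yonedaEquiv.injective ?_⟩
  rw [yonedaEquiv_comp, Equiv.apply_symm_apply, hpa]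
  rfl

theorem isIso_iff_bijective_comp_of_isSeparator (hA : IsSeparator A) {U V : Cᵒᵖ ⥤ Type u}
    (ε : U ⟶ V) : IsIso ε ↔ Bijective (fun f : A ⟶ U => f ≫ ε) := by
  refine ⟨fun _ => bijective_comp_of_isIso A ε, fun hε => ?_⟩
  rw [NatTrans.isIso_iff_isIso_app]
  rintro ⟨X⟩
  obtain ⟨r⟩ := nonempty_retract_yoneda_of_isSeparator hA X
  rw [isIso_iff_bijective, bijective_app_iff_bijective_comp_yoneda]
  exact r.bijective_comp hε

end Presheaf

end CategoryTheory

theorem isIso_homFunctor_map_iff {M E : Type u} [Monoid M] [Monoid E] (A : ActCat M)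
    (φ : E →* End A) {U V : ActCat M} (ε : U ⟶ V) :
    IsIso ((homFunctor A φ).map ε) ↔ Bijective (fun f : A ⟶ U => f ≫ ε) := by
  rw [NatTrans.isIso_iff_isIso_app]
  exact ⟨fun h => (isIso_iff_bijective _).mp (h (op (SingleObj.star E))),
    fun h _ => (isIso_iff_bijective _).mpr h⟩

/-- If the right `M`-act `A` is a generator (separator) of the category of right
`M`-acts, then the regular act `M` is a retract of `A`, a morphism of `M`-acts is an
`H_A`-equivalence iff it is an isomorphism, and consequently every `M`-act is
`H_A`-colocal. -/
theorem generator_retract_colocal {M : Type u} [Monoid M] (A : ActCat M)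
    (hA : IsSeparator A) :
    (∃ (i : yoneda.obj (SingleObj.star M) ⟶ A) (p : A ⟶ yoneda.obj (SingleObj.star M)),
        i ≫ p = 𝟙 (yoneda.obj (SingleObj.star M))) ∧
    (∀ {U V : ActCat M} (ε : U ⟶ V),
      IsIso ((homFunctor A (MonoidHom.id (CategoryTheory.End A))).map ε) ↔ IsIso ε) ∧
    (∀ X : ActCat M, ∀ {U V : ActCat M} (ε : U ⟶ V),
      IsIso ((homFunctor A (MonoidHom.id (CategoryTheory.End A))).map ε) →
        Function.Bijective (fun f : X ⟶ U => f ≫ ε)) := by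
  obtain ⟨r⟩ := nonempty_retract_yoneda_of_isSeparator hA (SingleObj.star M)
  have hequiv : ∀ {U V : ActCat M} (ε : U ⟶ V),
      IsIso ((homFunctor A (MonoidHom.id (End A))).map ε) ↔ IsIso ε := fun ε =>
    (isIso_homFunctor_map_iff A _ ε).trans (isIso_iff_bijective_comp_of_isSeparator hA ε).symm
  refine ⟨⟨r.i, r.r, r.retract⟩, hequiv, fun X U V ε hε => ?_⟩
  have := (hequiv ε).mp hε
  exact bijective_comp_of_isIso X ε
end
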